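/- Let φ : [0,∞) × ℝⁿ → ℝ be smooth with 1 + Σ_{i=1}^n φ_i² - e^t φ_t² > 0 everywhere, and suppose φ satisfies the timelike extremal surface equation -φ_{tt} - ((n+2)/2) φ_t + e^{-t} Σ φ_{ii} + [φ_t ∂_t(Σ φ_i² - e^t φ_t²)]/[2(1+Σ φ_i² - e^t φ_t²)] - Σ_j e^{-t}[φ_j ∂_{x_j}(Σ φ_i² - e^t φ_t²)]/[2(1+Σ φ_i² - e^t φ_t²)] = 0. Define ψ : [-2, 0) × ℝⁿ → ℝ by ψ(τ, x) = φ( -2 ln(-τ/2), x ) (i.e., τ = -2 e^{-t/2}). Then 1 + Σ_{i=1}^n ψ_{x_i}² - ψ_τ² > 0 everywhere and ψ satisfies the Born–Infeld-type equation with source: -∂_τ( ψ_τ / √(1 + Σ_i ψ_{x_i}² - ψ_τ²) ) + Σ_{j=1}^n ∂_{x_j}( ψ_{x_j} / √(1 + Σ_i ψ_{x_i}² - ψ_τ²) ) = -((n+1)/τ) · ψ_τ / √(1 + Σ_i ψ_{x_i}² - ψ_τ²). -/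

import Mathlib

/-!
With `t = -2 log(-τ/2)` one has `dt/dτ = -2/τ` and `e^t = 4/τ²`, so `ψ_τ = -(2/τ) φ_t`,
`ψ_{x_i} = φ_i` and `ψ_τ² = e^t φ_t²`: the Born–Infeld factor `1 + |∇ₓψ|² - ψ_τ²` is `1 + W` at the
corresponding point. Differentiating the quotients by the chain and quotient rules, the
Born–Infeld expression minus the source term equals `4 / (τ² √(1 + W))` times the left-hand side
of the extremal surface equation, with `e^{-t} = τ²/4`.
-/

open Real MeasureTheory

/-- Time derivative ∂ₜ of a function on ℝ × ℝⁿ. -/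
noncomputable def pT (n : ℕ) (φ : ℝ × (Fin n → ℝ) → ℝ) : ℝ × (Fin n → ℝ) → ℝ :=
  fun p => deriv (fun s => φ (s, p.2)) p.1

/-- Spatial derivative ∂ₓᵢ of a function on ℝ × ℝⁿ. -/
noncomputable def pX (n : ℕ) (i : Fin n) (φ : ℝ × (Fin n → ℝ) → ℝ) : ℝ × (Fin n → ℝ) → ℝ :=
  fun p => deriv (fun s => φ (p.1, Function.update p.2 i s)) (p.2 i)

/-- Mixed spatial derivative D^I = ∂ₓ₁^{I₁} ⋯ ∂ₓₙ^{Iₙ}. -/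
noncomputable def Dmix (n : ℕ) (I : Fin n → ℕ) (φ : ℝ × (Fin n → ℝ) → ℝ) : ℝ × (Fin n → ℝ) → ℝ :=
  (List.ofFn (fun i : Fin n => (pX n i)^[I i])).foldr (· ∘ ·) id φ

/-- The de Sitter wave operator □_g φ = -∂ₜ²φ - (n/2)∂ₜφ + e^{-t} Σᵢ ∂ₓᵢ²φ. -/
noncomputable def dBox (n : ℕ) (φ : ℝ × (Fin n → ℝ) → ℝ) : ℝ × (Fin n → ℝ) → ℝ :=
  fun p => -(pT n (pT n φ) p) - ((n : ℝ) / 2) * pT n φ p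
    + Real.exp (-p.1) * ∑ i : Fin n, pX n i (pX n i φ) p

/-- The de Sitter null form Q(φ,ψ) = -φₜψₜ + e^{-t} Σᵢ φᵢψᵢ. -/
noncomputable def nullQ (n : ℕ) (φ ψ : ℝ × (Fin n → ℝ) → ℝ) : ℝ × (Fin n → ℝ) → ℝ :=
  fun p => -(pT n φ p) * pT n ψ p + Real.exp (-p.1) * ∑ i : Fin n, pX n i φ p * pX n i ψ p

variable {n : ℕ}

section PartialDerivatives

variable {f u v : ℝ × (Fin n → ℝ) → ℝ} {p : ℝ × (Fin n → ℝ)}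

theorem hasDerivAt_pT (hf : DifferentiableAt ℝ f p) :
    HasDerivAt (fun s => f (s, p.2)) (pT n f p) p.1 :=
  (hf.comp p.1 ((differentiableAt_id).prodMk (differentiableAt_const _))).hasDerivAt

theorem hasDerivAt_pX (hf : DifferentiableAt ℝ f p) (i : Fin n) :
    HasDerivAt (fun s => f (p.1, Function.update p.2 i s)) (pX n i f p) (p.2 i) := by
  have hf' : DifferentiableAt ℝ f (p.1, Function.update p.2 i (p.2 i)) := by
    rwa [Function.update_eq_self]
  have hslice : DifferentiableAt ℝ (fun s => (p.1, Function.update p.2 i s)) (p.2 i) :=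
    (differentiableAt_const _).prodMk (hasDerivAt_update p.2 i (p.2 i)).differentiableAt
  exact (hf'.comp (p.2 i) hslice).hasDerivAt

theorem pT_eq_fderiv (hf : DifferentiableAt ℝ f p) : pT n f p = fderiv ℝ f p (1, 0) :=
  (hasDerivAt_pT hf).unique (hf.hasFDerivAt.comp_hasDerivAt p.1
    ((hasDerivAt_id p.1).prodMk (hasDerivAt_const _ _)))

theorem pX_eq_fderiv (hf : DifferentiableAt ℝ f p) (i : Fin n) :
    pX n i f p = fderiv ℝ f p (0, Pi.single i 1) := by
  have hf' : DifferentiableAt ℝ f (p.1, Function.update p.2 i (p.2 i)) := by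
    rwa [Function.update_eq_self]
  have h := hf'.hasFDerivAt.comp_hasDerivAt _
    ((hasDerivAt_const (p.2 i) p.1).prodMk (hasDerivAt_update p.2 i (p.2 i)))
  rw [Function.update_eq_self] at h
  exact (hasDerivAt_pX hf i).unique h

theorem contDiff_pT {k m : WithTop ℕ∞} (hf : ContDiff ℝ k f) (hmk : m + 1 ≤ k) :
    ContDiff ℝ m (pT n f) := by
  have hd : Differentiable ℝ f := (hf.of_le hmk).differentiable (by simp)
  rw [show pT n f = fun p => fderiv ℝ f p (1, 0) from funext fun p => pT_eq_fderiv (hd p)]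
  exact (ContinuousLinearMap.apply ℝ ℝ _).contDiff.comp (hf.fderiv_right hmk)

theorem contDiff_pX {k m : WithTop ℕ∞} (hf : ContDiff ℝ k f) (hmk : m + 1 ≤ k) (i : Fin n) :
    ContDiff ℝ m (pX n i f) := by
  have hd : Differentiable ℝ f := (hf.of_le hmk).differentiable (by simp)
  rw [show pX n i f = fun p => fderiv ℝ f p (0, Pi.single i 1) from
    funext fun p => pX_eq_fderiv (hd p) i]
  exact (ContinuousLinearMap.apply ℝ ℝ _).contDiff.comp (hf.fderiv_right hmk)

theorem HasDerivAt.div_sqrt {u v : ℝ → ℝ} {u' v' x : ℝ} (hu : HasDerivAt u u' x)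
    (hv : HasDerivAt v v' x) (hx : 0 < v x) :
    HasDerivAt (fun s => u s / √(v s)) ((u' * v x - u x * v' / 2) / (v x * √(v x))) x := by
  refine (hu.div (hv.sqrt hx.ne') (Real.sqrt_ne_zero'.2 hx)).congr_deriv ?_
  field_simp
  rw [Real.sq_sqrt hx.le]
  ring

theorem pT_div_sqrt (hu : DifferentiableAt ℝ u p) (hv : DifferentiableAt ℝ v p) (hp : 0 < v p) :
    pT n (fun q => u q / √(v q)) p = (pT n u p * v p - u p * pT n v p / 2) / (v p * √(v p)) :=
  ((hasDerivAt_pT hu).div_sqrt (hasDerivAt_pT hv) hp).deriv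

theorem pX_div_sqrt (hu : DifferentiableAt ℝ u p) (hv : DifferentiableAt ℝ v p) (hp : 0 < v p)
    (i : Fin n) :
    pX n i (fun q => u q / √(v q)) p
      = (pX n i u p * v p - u p * pX n i v p / 2) / (v p * √(v p)) := by
  have h := (hasDerivAt_pX hu i).div_sqrt (hasDerivAt_pX hv i)
    (by rwa [Function.update_eq_self])
  simp only [Function.update_eq_self] at h
  exact h.deriv

theorem pT_const_add (c : ℝ) : pT n (fun q => c + f q) p = pT n f p :=
  deriv_const_add c

theorem pX_const_add (c : ℝ) (i : Fin n) : pX n i (fun q => c + f q) p = pX n i f p :=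
  deriv_const_add c

end PartialDerivatives

theorem pT_comp_fst {f : ℝ × (Fin n → ℝ) → ℝ} {T : ℝ → ℝ} {T' τ : ℝ} (hT : HasDerivAt T T' τ)
    (x : Fin n → ℝ) (hf : DifferentiableAt ℝ f (T τ, x)) :
    pT n (fun q => f (T q.1, q.2)) (τ, x) = T' * pT n f (T τ, x) := by
  rw [mul_comm]
  exact ((hasDerivAt_pT hf).comp τ hT).deriv

theorem pX_comp_fst (f : ℝ × (Fin n → ℝ) → ℝ) (T : ℝ → ℝ) (i : Fin n) (q : ℝ × (Fin n → ℝ)) :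
    pX n i (fun q => f (T q.1, q.2)) q = pX n i f (T q.1, q.2) :=
  rfl

theorem pX_congr_slice {f g : ℝ × (Fin n → ℝ) → ℝ} {s t : ℝ} (h : ∀ y, f (s, y) = g (t, y))
    (i : Fin n) (x : Fin n → ℝ) : pX n i f (s, x) = pX n i g (t, x) := by
  simp only [pX, h]

noncomputable def tOfTau (τ : ℝ) : ℝ := -2 * Real.log (-τ / 2)

section TimeChange

variable {τ : ℝ}

theorem hasDerivAt_tOfTau (hτ : τ < 0) : HasDerivAt tOfTau (-2 / τ) τ := by
  have h := (((hasDerivAt_neg τ).div_const 2).log (by linarith)).const_mul (-2)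
  refine h.congr_deriv ?_
  field_simp

theorem exp_neg_tOfTau (hτ : τ < 0) : Real.exp (-tOfTau τ) = τ ^ 2 / 4 := by
  rw [tOfTau, show -(-2 * Real.log (-τ / 2)) = Real.log (-τ / 2) + Real.log (-τ / 2) by ring,
    Real.exp_add, Real.exp_log (by linarith)]
  ring

theorem exp_tOfTau (hτ : τ < 0) : Real.exp (tOfTau τ) = 4 / τ ^ 2 := by
  rw [← inv_div, ← exp_neg_tOfTau hτ, Real.exp_neg, inv_inv]

theorem tOfTau_nonneg (h2 : -2 ≤ τ) (h0 : τ < 0) : 0 ≤ tOfTau τ := by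
  have := Real.log_nonpos (by linarith : 0 ≤ -τ / 2) (by linarith)
  unfold tOfTau
  linarith

end TimeChange

noncomputable def bornInfeldFactor (n : ℕ) (ψ : ℝ × (Fin n → ℝ) → ℝ) (q : ℝ × (Fin n → ℝ)) : ℝ :=
  1 + (∑ i : Fin n, (pX n i ψ q) ^ 2) - (pT n ψ q) ^ 2

/-- `e^t Q(φ, φ)`, where `Q = nullQ` is the null form of the de Sitter metric `-dt² + e^t dx²`. -/
noncomputable def deSitterGradSq (n : ℕ) (φ : ℝ × (Fin n → ℝ) → ℝ) : ℝ × (Fin n → ℝ) → ℝ :=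
  fun q => (∑ i : Fin n, (pX n i φ q) ^ 2) - Real.exp q.1 * (pT n φ q) ^ 2

section Reparametrization

variable {φ W ψ : ℝ × (Fin n → ℝ) → ℝ} {τ : ℝ}

theorem contDiff_deSitterGradSq (hφ : ContDiff ℝ 2 φ) : ContDiff ℝ 1 (deSitterGradSq n φ) :=
  (ContDiff.sum fun i _ => (contDiff_pX hφ le_rfl i).pow 2).sub
    ((Real.contDiff_exp.comp contDiff_fst).mul ((contDiff_pT hφ le_rfl).pow 2))

theorem pT_eq_mul_pT_tOfTau (hφ : Differentiable ℝ φ)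
    (hψ : ψ = fun q => φ (tOfTau q.1, q.2)) (hτ : τ < 0) (x : Fin n → ℝ) :
    pT n ψ (τ, x) = -2 / τ * pT n φ (tOfTau τ, x) := by
  subst hψ
  exact pT_comp_fst (hasDerivAt_tOfTau hτ) x (hφ _)

theorem bornInfeldFactor_eq (hφ : Differentiable ℝ φ) (hW : W = deSitterGradSq n φ)
    (hψ : ψ = fun q => φ (tOfTau q.1, q.2)) (hτ : τ < 0) (x : Fin n → ℝ) :
    bornInfeldFactor n ψ (τ, x) = 1 + W (tOfTau τ, x) := by
  rw [bornInfeldFactor, pT_eq_mul_pT_tOfTau hφ hψ hτ, hW]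
  subst hψ
  simp only [deSitterGradSq, pX_comp_fst, exp_tOfTau hτ]
  field_simp
  ring

theorem pT_div_sqrt_bornInfeldFactor (hφ : ContDiff ℝ 2 φ) (hW : W = deSitterGradSq n φ)
    (hψ : ψ = fun q => φ (tOfTau q.1, q.2)) (hτ : τ < 0) (x : Fin n → ℝ)
    (hpos : 0 < 1 + W (tOfTau τ, x)) :
    pT n (fun r => pT n ψ r / √(bornInfeldFactor n ψ r)) (τ, x)
      = 2 / τ ^ 2 * (pT n φ (tOfTau τ, x) / √(1 + W (tOfTau τ, x)))
        + (-2 / τ) ^ 2 * ((pT n (pT n φ) (tOfTau τ, x) * (1 + W (tOfTau τ, x))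
            - pT n φ (tOfTau τ, x) * pT n W (tOfTau τ, x) / 2)
          / ((1 + W (tOfTau τ, x)) * √(1 + W (tOfTau τ, x)))) := by
  have hφd : Differentiable ℝ φ := hφ.differentiable (by norm_num)
  have hφt : Differentiable ℝ (pT n φ) :=
    (contDiff_pT (m := 1) hφ le_rfl).differentiable one_ne_zero
  have hWd : Differentiable ℝ (fun p => 1 + W p) :=
    hW ▸ ((contDiff_deSitterGradSq hφ).differentiable one_ne_zero).const_add 1
  have hQ : (fun s => pT n ψ (s, x) / √(bornInfeldFactor n ψ (s, x)))
      =ᶠ[nhds τ] fun s => -2 / s * (pT n φ (tOfTau s, x) / √(1 + W (tOfTau s, x))) := by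
    filter_upwards [Iio_mem_nhds hτ] with s hs
    rw [bornInfeldFactor_eq hφd hW hψ hs, pT_eq_mul_pT_tOfTau hφd hψ hs]
    ring
  have hG : HasDerivAt (fun s => pT n φ (tOfTau s, x) / √(1 + W (tOfTau s, x)))
      (pT n (fun p => pT n φ p / √(1 + W p)) (tOfTau τ, x) * (-2 / τ)) τ := by
    have hGd : DifferentiableAt ℝ (fun p => pT n φ p / √(1 + W p)) (tOfTau τ, x) :=
      (hφt _).mul (((hWd _).sqrt hpos.ne').fun_inv (Real.sqrt_ne_zero'.2 hpos))
    exact (hasDerivAt_pT hGd).comp τ (hasDerivAt_tOfTau hτ)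
  have hinv : HasDerivAt (fun s : ℝ => -2 / s) (2 / τ ^ 2) τ :=
    ((hasDerivAt_const τ (-2 : ℝ)).div (hasDerivAt_id τ) hτ.ne).congr_deriv (by simp)
  rw [pT, hQ.deriv_eq, (hinv.fun_mul hG).deriv,
    pT_div_sqrt (hφt _) (hWd _) hpos, pT_const_add]
  ring

theorem pX_div_sqrt_bornInfeldFactor (hφ : ContDiff ℝ 2 φ) (hW : W = deSitterGradSq n φ)
    (hψ : ψ = fun q => φ (tOfTau q.1, q.2)) (hτ : τ < 0) (x : Fin n → ℝ)
    (hpos : 0 < 1 + W (tOfTau τ, x)) (j : Fin n) :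
    pX n j (fun r => pX n j ψ r / √(bornInfeldFactor n ψ r)) (τ, x)
      = (pX n j (pX n j φ) (tOfTau τ, x) * (1 + W (tOfTau τ, x))
          - pX n j φ (tOfTau τ, x) * pX n j W (tOfTau τ, x) / 2)
        / ((1 + W (tOfTau τ, x)) * √(1 + W (tOfTau τ, x))) := by
  have hφx : Differentiable ℝ (pX n j φ) :=
    (contDiff_pX (m := 1) hφ le_rfl j).differentiable one_ne_zero
  have hWd : Differentiable ℝ (fun p => 1 + W p) :=
    hW ▸ ((contDiff_deSitterGradSq hφ).differentiable one_ne_zero).const_add 1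
  rw [pX_congr_slice (g := fun p => pX n j φ p / √(1 + W p)) (t := tOfTau τ) _ j x,
    pX_div_sqrt (hφx _) (hWd _) hpos, pX_const_add]
  intro y
  rw [bornInfeldFactor_eq (hφ.differentiable (by norm_num)) hW hψ hτ, hψ, pX_comp_fst]

end Reparametrization

theorem bornInfeld_eq_source_of_extremal {τ E a b g gt : ℝ} (c d w : Fin n → ℝ) (hτ : τ ≠ 0)
    (hg : 0 < g) (hE : E = τ ^ 2 / 4)
    (hEL : -b - ((n + 2) / 2) * a + E * ∑ i, d i + a * gt / (2 * g)
      - ∑ j, E * (c j * w j) / (2 * g) = 0) :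
    -(2 / τ ^ 2 * (a / √g) + (-2 / τ) ^ 2 * ((b * g - a * gt / 2) / (g * √g)))
      + ∑ j, (d j * g - c j * w j / 2) / (g * √g)
      = -((n + 1) / τ) * (-2 / τ * a / √g) := by
  rw [← Finset.sum_div, Finset.sum_sub_distrib, ← Finset.sum_mul, ← Finset.sum_div]
  rw [← Finset.sum_div, ← Finset.mul_sum] at hEL
  subst hE
  field_simp at hEL ⊢
  linear_combination hEL

theorem stmt3_general (n : ℕ) (φ : ℝ × (Fin n → ℝ) → ℝ) (hφ : ContDiff ℝ (⊤ : ℕ∞) φ)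
    (W : ℝ × (Fin n → ℝ) → ℝ)
    (hW : W = fun q => (∑ i : Fin n, (pX n i φ q) ^ 2) - Real.exp q.1 * (pT n φ q) ^ 2)
    (hpos : ∀ p : ℝ × (Fin n → ℝ), 0 ≤ p.1 → 0 < 1 + W p)
    (hEL : ∀ p : ℝ × (Fin n → ℝ), 0 ≤ p.1 →
      -(pT n (pT n φ) p) - (((n : ℝ) + 2) / 2) * pT n φ p
        + Real.exp (-p.1) * (∑ i : Fin n, pX n i (pX n i φ) p)
        + pT n φ p * pT n W p / (2 * (1 + W p))
        - (∑ j : Fin n, Real.exp (-p.1) * (pX n j φ p * pX n j W p) / (2 * (1 + W p))) = 0)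
    (ψ : ℝ × (Fin n → ℝ) → ℝ)
    (hψ : ψ = fun q => φ (-2 * Real.log (-q.1 / 2), q.2)) :
    ∀ q : ℝ × (Fin n → ℝ), -2 ≤ q.1 → q.1 < 0 →
      (0 < 1 + (∑ i : Fin n, (pX n i ψ q) ^ 2) - (pT n ψ q) ^ 2) ∧
      -(pT n (fun r => pT n ψ r /
            Real.sqrt (1 + (∑ i : Fin n, (pX n i ψ r) ^ 2) - (pT n ψ r) ^ 2)) q)
        + (∑ j : Fin n, pX n j (fun r => pX n j ψ r /
            Real.sqrt (1 + (∑ i : Fin n, (pX n i ψ r) ^ 2) - (pT n ψ r) ^ 2)) q)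
        = -(((n : ℝ) + 1) / q.1) *
            (pT n ψ q / Real.sqrt (1 + (∑ i : Fin n, (pX n i ψ q) ^ 2) - (pT n ψ q) ^ 2)) := by
  rintro ⟨τ, x⟩ (hτ2 : -2 ≤ τ) (hτ0 : τ < 0)
  simp only [← bornInfeldFactor.eq_1]
  replace hψ : ψ = fun q => φ (tOfTau q.1, q.2) := hψ
  have hφ2 : ContDiff ℝ 2 φ := hφ.of_le (WithTop.coe_le_coe.2 le_top)
  have hφd : Differentiable ℝ φ := hφ2.differentiable (by norm_num)
  have ht := tOfTau_nonneg hτ2 hτ0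
  have hg := hpos (tOfTau τ, x) ht
  rw [bornInfeldFactor_eq hφd hW hψ hτ0 x]
  refine ⟨hg, ?_⟩
  rw [pT_div_sqrt_bornInfeldFactor hφ2 hW hψ hτ0 x hg,
    Finset.sum_congr rfl fun j _ => pX_div_sqrt_bornInfeldFactor hφ2 hW hψ hτ0 x hg j,
    pT_eq_mul_pT_tOfTau hφd hψ hτ0]
  exact bornInfeld_eq_source_of_extremal _ _ _ hτ0.ne hg (exp_neg_tOfTau hτ0) (hEL (tOfTau τ, x) ht)

/-- Under the change of time variable `τ = -2e^{-t/2}` (i.e. `t = -2 ln(-τ/2)`), a timelike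
solution of the extremal surface equation in de Sitter spacetime becomes a solution of the
Born–Infeld-type equation with source `-((n+1)/τ)·ψ_τ/√(1+Σψ_{xᵢ}²-ψ_τ²)`. -/
theorem stmt3 (n : ℕ) (hn : 1 ≤ n) (φ : ℝ × (Fin n → ℝ) → ℝ) (hφ : ContDiff ℝ (⊤ : ℕ∞) φ)
    (W : ℝ × (Fin n → ℝ) → ℝ)
    (hW : W = fun q => (∑ i : Fin n, (pX n i φ q) ^ 2) - Real.exp q.1 * (pT n φ q) ^ 2)
    (hpos : ∀ p : ℝ × (Fin n → ℝ), 0 ≤ p.1 → 0 < 1 + W p)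
    (hEL : ∀ p : ℝ × (Fin n → ℝ), 0 ≤ p.1 →
      -(pT n (pT n φ) p) - (((n : ℝ) + 2) / 2) * pT n φ p
        + Real.exp (-p.1) * (∑ i : Fin n, pX n i (pX n i φ) p)
        + pT n φ p * pT n W p / (2 * (1 + W p))
        - (∑ j : Fin n, Real.exp (-p.1) * (pX n j φ p * pX n j W p) / (2 * (1 + W p))) = 0)
    (ψ : ℝ × (Fin n → ℝ) → ℝ)
    (hψ : ψ = fun q => φ (-2 * Real.log (-q.1 / 2), q.2)) :
    ∀ q : ℝ × (Fin n → ℝ), -2 ≤ q.1 → q.1 < 0 →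
      (0 < 1 + (∑ i : Fin n, (pX n i ψ q) ^ 2) - (pT n ψ q) ^ 2) ∧
      -(pT n (fun r => pT n ψ r /
            Real.sqrt (1 + (∑ i : Fin n, (pX n i ψ r) ^ 2) - (pT n ψ r) ^ 2)) q)
        + (∑ j : Fin n, pX n j (fun r => pX n j ψ r /
            Real.sqrt (1 + (∑ i : Fin n, (pX n i ψ r) ^ 2) - (pT n ψ r) ^ 2)) q)
        = -(((n : ℝ) + 1) / q.1) *
            (pT n ψ q / Real.sqrt (1 + (∑ i : Fin n, (pX n i ψ q) ^ 2) - (pT n ψ q) ^ 2)) :=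
  stmt3_general n φ hφ W hW hpos hEL ψ hψ
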